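/- Let μ be a W-valued measure on ℤ_p supported on ℤ_p^× and let φ: ℤ_p^× → W be a locally constant function. Then for every integer m (positive or negative), ∫_{ℤ_p^×} φ(x) x^m dμ = (θ^m([φ]Φ_μ))|_{t=1}, where θ = t d/dt and [φ]Φ_μ denotes the Amice transform of the twisted measure φ·μ; for negative m, θ^m is defined as the limit lim_i θ^{m+(p-1)p^i}. -/

import Mathlib

/-!
Since `(j + 1) C(x, j + 1) + j C(x, j) = x C(x, j)`, the operator `θ` acts on Amice transforms
as multiplication of the measure by `x`, so the constant coefficient of `θ^k [φ]Φ_μ` is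
`∫ φ(x) x^k dμ`. For `m < 0`, Euler's congruence `x^((p-1)p^i) ≡ 1 mod p^(i+1)` on units and
`p^k ∣ x^k` on non-units (where the junk value of `x^m` is `0`) make `x^(m + (p-1)p^i) → x^m`
uniformly on `ℤ_p`, and the limit passes through the continuous functional `ν`.
-/

open PadicInt PowerSeries Filter

/-- Binomial coefficient function as a continuous map with values in `W`. -/
noncomputable def binomMap (p : ℕ) [Fact p.Prime] (W : Type*) [NormedCommRing W]
    [Algebra ℤ_[p] W] (hca : Continuous (algebraMap ℤ_[p] W)) (n : ℕ) : C(ℤ_[p], W) :=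
  (⟨algebraMap ℤ_[p] W, hca⟩ : C(ℤ_[p], W)).comp
    ⟨fun x => Ring.choose x n, PadicInt.continuous_choose n⟩

/-- The operator `θ = t·d/dt` on `W[[T]]` with `t = 1 + T`. -/
noncomputable def theta (W : Type*) [CommRing W] (F : PowerSeries W) : PowerSeries W :=
  (1 + PowerSeries.X) * F.derivativeFun

/-- Integer powers `x^m` of a p-adic integer, using `Ring.inverse` for negative `m`
(this is the genuine inverse power when `x` is a unit). -/
noncomputable def padicZPow (p : ℕ) [Fact p.Prime] (x : ℤ_[p]) (m : ℤ) : ℤ_[p] :=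
  if 0 ≤ m then x ^ m.toNat else Ring.inverse x ^ (-m).toNat

theorem Ring.succ_mul_choose_succ {R : Type*} [CommRing R] [BinomialRing R] (x : R) (j : ℕ) :
    ((j : R) + 1) * Ring.choose x (j + 1) = (x - j) * Ring.choose x j := by
  have h := Ring.choose_smul_choose x (Nat.le_add_right j 1)
  rw [Nat.choose_succ_self_right, Nat.add_sub_cancel_left, Ring.choose_one_right,
    nsmul_eq_mul] at h
  push_cast at h
  rw [h, mul_comm]

lemma coeff_theta {W : Type*} [CommRing W] (F : PowerSeries W) (j : ℕ) :
    coeff j (theta W F) = coeff (j + 1) F * ((j : W) + 1) + coeff j F * j := by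
  rw [theta, derivativeFun, LinearMap.toFun_eq_coe, Derivation.coeFn_coe, add_mul, one_mul,
    map_add, coeff_derivative]
  cases j with
  | zero => simp [coeff_zero_X_mul]
  | succ k => rw [coeff_succ_X_mul, coeff_derivative]; push_cast; ring

section AmiceTransform

variable {p : ℕ} [Fact p.Prime] {W : Type*} [NormedCommRing W] [Algebra ℤ_[p] W]
  (hca : Continuous (algebraMap ℤ_[p] W))

lemma binomMap_zero : binomMap p W hca 0 = 1 := by
  ext x
  simp [binomMap]

lemma succ_smul_binomMap_succ_add_smul_binomMap (j : ℕ) :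
    ((j : W) + 1) • binomMap p W hca (j + 1) + (j : W) • binomMap p W hca j =
      ⟨algebraMap ℤ_[p] W, hca⟩ * binomMap p W hca j := by
  ext x
  have h := congrArg (algebraMap ℤ_[p] W) (Ring.succ_mul_choose_succ x j)
  simp only [map_mul, map_add, map_sub, map_natCast, map_one] at h
  simp only [binomMap, ContinuousMap.add_apply, ContinuousMap.smul_apply,
    ContinuousMap.mul_apply, ContinuousMap.comp_apply, ContinuousMap.coe_mk, smul_eq_mul]
  linear_combination h

lemma coeff_theta_iterate_of_amice (ν : C(ℤ_[p], W) →ₗ[W] W) {G : PowerSeries W}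
    (hG : ∀ k, coeff k G = ν (binomMap p W hca k)) (k j : ℕ) :
    coeff j ((theta W)^[k] G) = ν (⟨algebraMap ℤ_[p] W, hca⟩ ^ k * binomMap p W hca j) := by
  induction k generalizing j with
  | zero => simpa using hG j
  | succ k ih =>
    rw [Function.iterate_succ_apply', coeff_theta, ih, ih, pow_succ, mul_assoc,
      ← succ_smul_binomMap_succ_add_smul_binomMap hca j]
    simp only [mul_add, mul_smul_comm, map_add, map_smul, smul_eq_mul]
    ring

lemma constantCoeff_theta_iterate_of_amice (ν : C(ℤ_[p], W) →ₗ[W] W) {G : PowerSeries W}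
    (hG : ∀ k, coeff k G = ν (binomMap p W hca k)) (k : ℕ) :
    constantCoeff ((theta W)^[k] G) = ν (⟨algebraMap ℤ_[p] W, hca⟩ ^ k) := by
  rw [← coeff_zero_eq_constantCoeff_apply, coeff_theta_iterate_of_amice hca ν hG,
    binomMap_zero, mul_one]

end AmiceTransform

namespace PadicInt

variable {p : ℕ} [Fact p.Prime]

theorem pow_dvd_pow_totient_sub_one {x : ℤ_[p]} (hx : IsUnit x) (n : ℕ) :
    (p : ℤ_[p]) ^ n ∣ x ^ (p ^ n).totient - 1 := by
  rw [← Ideal.mem_span_singleton, ← ker_toZModPow, RingHom.mem_ker, map_sub, map_pow, map_one,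
    sub_eq_zero]
  obtain ⟨v, hv⟩ := hx.map (toZModPow n)
  rw [← hv, ← Units.val_pow_eq_pow_val, ZMod.pow_totient, Units.val_one]

theorem pow_dvd_pow_of_not_isUnit {x : ℤ_[p]} (hx : ¬IsUnit x) (k : ℕ) :
    (p : ℤ_[p]) ^ k ∣ x ^ k :=
  pow_dvd_pow_of_dvd ((norm_lt_one_iff_dvd x).1 (not_isUnit_iff.1 hx)) k

theorem pow_dvd_pow_sub_inverse_pow (x : ℤ_[p]) {N i k r : ℕ} (hr : 0 < r)
    (hkr : k + r = (p - 1) * p ^ i) (hNi : N ≤ i + 1) (hNk : N ≤ k) :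
    (p : ℤ_[p]) ^ N ∣ x ^ k - Ring.inverse x ^ r := by
  by_cases hx : IsUnit x
  · have hEuler := pow_dvd_pow_totient_sub_one hx (i + 1)
    rw [Nat.totient_prime_pow_succ Fact.out, mul_comm, ← hkr] at hEuler
    obtain ⟨u, rfl⟩ := hx
    have hfactor : (u : ℤ_[p]) ^ k - Ring.inverse (u : ℤ_[p]) ^ r =
        Ring.inverse (u : ℤ_[p]) ^ r * ((u : ℤ_[p]) ^ (k + r) - 1) := by
      rw [Ring.inverse_unit, mul_sub, mul_one, pow_add, mul_left_comm, ← mul_pow,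
        Units.inv_mul, one_pow, mul_one]
    rw [hfactor]
    exact ((pow_dvd_pow _ hNi).trans hEuler).mul_left _
  · rw [Ring.inverse_non_unit x hx, zero_pow hr.ne', sub_zero]
    exact (pow_dvd_pow _ hNk).trans (pow_dvd_pow_of_not_isUnit hx k)

theorem tendstoUniformly_pow_padicZPow {m : ℤ} (hm : m < 0) :
    TendstoUniformly (fun i x => x ^ (m + ((p : ℤ) - 1) * (p : ℤ) ^ i).toNat)
      (fun x => padicZPow p x m) atTop := by
  rw [Metric.tendstoUniformly_iff]
  intro ε hε
  have hp : p.Prime := Fact.out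
  have hp_norm : ‖(p : ℤ_[p])‖ < 1 := by
    rw [norm_p]; exact inv_lt_one_of_one_lt₀ (mod_cast hp.one_lt)
  obtain ⟨N, hN⟩ := exists_pow_lt_of_lt_one hε hp_norm
  filter_upwards [eventually_ge_atTop (N + (-m).toNat)] with i hi x
  have hpi : i < (p - 1) * p ^ i :=
    (Nat.lt_pow_self hp.one_lt).trans_le (Nat.le_mul_of_pos_left _ (by have := hp.two_le; omega))
  have hcast : (((p - 1) * p ^ i : ℕ) : ℤ) = ((p : ℤ) - 1) * (p : ℤ) ^ i := by
    push_cast [Nat.cast_sub hp.one_le]; ring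
  rw [← hcast]
  obtain ⟨c, hc⟩ := pow_dvd_pow_sub_inverse_pow x (N := N) (i := i)
    (k := (m + ((p - 1) * p ^ i : ℕ)).toNat) (r := (-m).toNat) (by omega) (by omega)
    (by omega) (by omega)
  rw [dist_comm, dist_eq_norm, padicZPow, if_neg hm.not_ge, hc, norm_mul, norm_pow]
  exact (mul_le_of_le_one_right (by positivity) (norm_le_one c)).trans_lt hN

theorem continuous_padicZPow (m : ℤ) : Continuous fun x : ℤ_[p] => padicZPow p x m := by
  by_cases hm : 0 ≤ m
  · simpa only [padicZPow, if_pos hm] using continuous_pow m.toNat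
  · exact (tendstoUniformly_pow_padicZPow (not_le.1 hm)).continuous
      (.of_forall fun _ => continuous_pow _)

end PadicInt

theorem statement6_general (p : ℕ) [Fact p.Prime] (W : Type*) [NormedCommRing W]
    [Algebra ℤ_[p] W] (hca : Continuous (algebraMap ℤ_[p] W))
    (μ : C(ℤ_[p], W) →L[W] W)
    (n : ℕ) (φ : ZMod (p ^ n) → W)  -- the locally constant function
    -- ν = φ·μ is the twisted measure :
    (ν : C(ℤ_[p], W) →L[W] W)
    (hν : ∀ (ψ Φψ : C(ℤ_[p], W)),
      (∀ x : ℤ_[p], Φψ x = φ (PadicInt.toZModPow n x) * ψ x) → ν ψ = μ Φψ)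
    -- G = [φ]Φ_μ is the Amice transform of φ·μ :
    (G : PowerSeries W)
    (hG : ∀ k : ℕ, PowerSeries.coeff k G = ν (binomMap p W hca k))
    (m : ℤ)
    -- Ψ is the function x ↦ φ(x mod p^n)·x^m :
    (Ψ : C(ℤ_[p], W))
    (hΨ : ∀ x : ℤ_[p],
      Ψ x = φ (PadicInt.toZModPow n x) * algebraMap ℤ_[p] W (padicZPow p x m)) :
    (0 ≤ m → PowerSeries.constantCoeff ((theta W)^[m.toNat] G) = μ Ψ) ∧
      (m < 0 → Tendsto (fun i : ℕ =>
          PowerSeries.constantCoeff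
            ((theta W)^[(m + ((p : ℤ) - 1) * (p : ℤ) ^ i).toNat] G))
        atTop (nhds (μ Ψ))) := by
  set ι : C(ℤ_[p], W) := ⟨algebraMap ℤ_[p] W, hca⟩
  let xm : C(ℤ_[p], ℤ_[p]) := ⟨fun x => padicZPow p x m, continuous_padicZPow m⟩
  have hmoment (k : ℕ) :
      constantCoeff ((theta W)^[k] G) = ν (ι.comp (ContinuousMap.id ℤ_[p] ^ k)) := by
    rw [constantCoeff_theta_iterate_of_amice hca ν.toLinearMap hG]
    exact congrArg ν (ContinuousMap.ext fun x => by simp [ι])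
  have hνxm : ν (ι.comp xm) = μ Ψ := hν _ _ fun x => by simp [hΨ, ι, xm]
  refine ⟨fun hm => ?_, fun hm => ?_⟩
  · rw [hmoment, ← hνxm]
    congr 2
    ext x
    simp [xm, padicZPow, hm]
  · rw [← hνxm]
    have hpow : Tendsto
        (fun i : ℕ => ContinuousMap.id ℤ_[p] ^ (m + ((p : ℤ) - 1) * (p : ℤ) ^ i).toNat)
        atTop (nhds xm) := by
      rw [ContinuousMap.tendsto_iff_tendstoUniformly]
      simpa [xm] using tendstoUniformly_pow_padicZPow hm
    exact (((ν.continuous.comp (ContinuousMap.continuous_postcomp ι)).tendsto xm).comp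
      hpow).congr fun i => (hmoment _).symm

theorem statement6 (p : ℕ) [Fact p.Prime] (W : Type*) [NormedCommRing W] [CompleteSpace W]
    [IsUltrametricDist W] [Algebra ℤ_[p] W] (hca : Continuous (algebraMap ℤ_[p] W))
    (μ : C(ℤ_[p], W) →L[W] W)
    -- μ is supported on ℤ_p^× :
    (hsupp : ∀ (φ Ψ : C(ℤ_[p], W)),
      (∀ x : ℤ_[p], Ψ x = if PadicInt.toZMod x = 0 then φ x else 0) → μ Ψ = 0)
    (n : ℕ) (φ : ZMod (p ^ n) → W)  -- the locally constant function
    -- ν = φ·μ is the twisted measure :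
    (ν : C(ℤ_[p], W) →L[W] W)
    (hν : ∀ (ψ Φψ : C(ℤ_[p], W)),
      (∀ x : ℤ_[p], Φψ x = φ (PadicInt.toZModPow n x) * ψ x) → ν ψ = μ Φψ)
    -- G = [φ]Φ_μ is the Amice transform of φ·μ :
    (G : PowerSeries W)
    (hG : ∀ k : ℕ, PowerSeries.coeff k G = ν (binomMap p W hca k))
    (m : ℤ)
    -- Ψ is the function x ↦ φ(x mod p^n)·x^m :
    (Ψ : C(ℤ_[p], W))
    (hΨ : ∀ x : ℤ_[p],
      Ψ x = φ (PadicInt.toZModPow n x) * algebraMap ℤ_[p] W (padicZPow p x m)) :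
    (0 ≤ m → PowerSeries.constantCoeff ((theta W)^[m.toNat] G) = μ Ψ) ∧
      (m < 0 → Tendsto (fun i : ℕ =>
          PowerSeries.constantCoeff
            ((theta W)^[(m + ((p : ℤ) - 1) * (p : ℤ) ^ i).toNat] G))
        atTop (nhds (μ Ψ))) :=
  statement6_general p W hca μ n φ ν hν G hG m Ψ hΨ
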